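/- Let R be a nonempty finite type, d ≥ 1, and ρ : Matrix (R × Fin d) (R × Fin d) ℂ. Then ∫ U, (1_R ⊗ U) · ρ · (1_R ⊗ U)ᴴ dμ_d = ρ_R ⊗ ((1/d) • 1), where 1_R ⊗ U is the Kronecker product of the identity on R with U, ρ_R is the partial trace of ρ over Fin d, and the right-hand side is the Kronecker product of ρ_R with the maximally mixed state (1/d) • 1 on Fin d. -/

import Mathlib

/-!
Block by block, `(1 ⊗ U) ρ (1 ⊗ U)ᴴ` has `(r, r')` block `U ρ_{rr'} Uᴴ`, so it suffices to average
`U B Uᴴ` for a single `d × d` matrix `B`. Left invariance of the Haar measure makes this average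
`F` invariant under conjugation by every unitary, i.e. `F` commutes with all unitaries. Among
them are the reflections `1 - 2 E_kk` and the transposition matrices, whose products give every
matrix unit, so `F` is scalar; conjugation preserves the trace, so `F = (tr B / d) • 1`.
-/

open MeasureTheory Matrix
open scoped Kronecker

noncomputable section

attribute [local instance] Matrix.normedAddCommGroup Matrix.normedSpace

local instance {d : ℕ} : MeasurableSpace (Matrix.unitaryGroup (Fin d) ℂ) := borel _

/-- Partial trace over the second factor `A` of a matrix on `R × A`. -/
def ptraceA {R A : Type*} [Fintype A]
    (M : Matrix (R × A) (R × A) ℂ) : Matrix R R ℂ :=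
  Matrix.of fun r r' => ∑ a : A, M (r, a) (r', a)

-- Instance search does not unify the topology of `Matrix.normedAddCommGroup` with
-- `instTopologicalSpaceMatrix`, so `Integrable` for matrix-valued maps needs this instance.
local instance {m n 𝕜 : Type*} [Fintype m] [Fintype n] [RCLike 𝕜] :
    ContinuousENorm (Matrix m n 𝕜) :=
  SeminormedAddGroup.toContinuousENorm

@[fun_prop]
theorem Continuous.matrix_kronecker {X l m n p α : Type*} [TopologicalSpace X]
    [TopologicalSpace α] [Mul α] [ContinuousMul α] {A : X → Matrix l m α} {B : X → Matrix n p α}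
    (hA : Continuous A) (hB : Continuous B) : Continuous fun x ↦ A x ⊗ₖ B x :=
  continuous_matrix fun i j ↦ (hA.matrix_elem i.1 j.1).mul (hB.matrix_elem i.2 j.2)

namespace Matrix

section UnitaryGroup

variable {n α 𝕜 : Type*} [Fintype n] [DecidableEq n]

theorem isCompact_unitaryGroup [RCLike 𝕜] : IsCompact (unitaryGroup n 𝕜 : Set (Matrix n n 𝕜)) := by
  refine Metric.isCompact_of_isClosed_isBounded ?_ ?_
  · exact (isClosed_eq (continuous_star.matrix_mul continuous_id) continuous_const).inter
      (isClosed_eq (continuous_id.matrix_mul continuous_star) continuous_const)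
  · exact (Metric.isBounded_closedBall (x := 0) (r := 1)).subset fun U hU ↦ by
      simpa using entrywise_sup_norm_bound_of_unitary hU

instance [RCLike 𝕜] : CompactSpace (unitaryGroup n 𝕜) :=
  isCompact_iff_compactSpace.mp isCompact_unitaryGroup

theorem permMatrix_swap_mul_single [Semiring α] (i j : n) :
    (Equiv.swap i j).permMatrix α * single j j 1 = single i j 1 := by
  ext a b
  simp only [Equiv.Perm.permMatrix, mul_apply, PEquiv.toMatrix_apply, Equiv.toPEquiv_apply,
    Option.mem_def, Option.some.injEq, Equiv.swap_apply_eq_iff, single_apply, ite_and, mul_ite,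
    mul_one, mul_zero, Finset.sum_ite_eq, Finset.mem_univ, ↓reduceIte, Equiv.swap_apply_right]
  grind

section CommRing

variable [CommRing α] [StarRing α]

theorem permMatrix_mem_unitaryGroup (σ : Equiv.Perm n) : σ.permMatrix α ∈ unitaryGroup n α := by
  rw [mem_unitaryGroup_iff', star_eq_conjTranspose, conjTranspose_permMatrix, ← permMatrix_mul]
  simp

theorem one_sub_two_smul_single_mem_unitaryGroup (k : n) :
    1 - (2 : α) • single k k 1 ∈ unitaryGroup n α := by
  rw [mem_unitaryGroup_iff, star_sub, star_one, star_smul, star_eq_conjTranspose (single k k 1),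
    conjTranspose_single]
  simp only [star_one, star_ofNat, sub_mul, mul_sub, one_mul, mul_one, smul_mul_smul,
    single_mul_single_same]
  module

end CommRing

theorem eq_trace_div_card_smul_one_of_forall_commute [Field α] [CharZero α] [StarRing α]
    {M : Matrix n n α} (hM : ∀ U ∈ unitaryGroup n α, Commute U M) :
    M = (M.trace / Fintype.card n) • 1 := by
  have hdiag (k : n) : Commute (single k k 1) M := by
    have h2 : Commute ((2 : α) • single k k 1) M := by
      simpa using (Commute.one_left M).sub_left (hM _ (one_sub_two_smul_single_mem_unitaryGroup k))
    simpa using h2.smul_left (2 : α)⁻¹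
  have hsingle : Pairwise fun i j ↦ Commute (single i j (1 : α)) M := fun i j _ ↦ by
    dsimp only
    rw [← permMatrix_swap_mul_single]
    exact (hM _ (permMatrix_mem_unitaryGroup _)).mul_left (hdiag j)
  obtain ⟨c, rfl⟩ := mem_range_scalar_of_commute_single hsingle
  cases isEmpty_or_nonempty n
  · exact Subsingleton.elim _ _
  · simp [Fintype.card_ne_zero, smul_one_eq_diagonal]

end UnitaryGroup

section Integral

variable {X m n 𝕜 : Type*} [MeasurableSpace X] {μ : Measure X} [Fintype m] [Fintype n] [RCLike 𝕜]

theorem integral_apply_apply {f : X → Matrix m n 𝕜} (hf : Integrable f μ) (i : m) (j : n) :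
    (∫ x, f x ∂μ) i j = ∫ x, f x i j ∂μ :=
  ((entryLinearMap 𝕜 𝕜 i j).toContinuousLinearMap.integral_comp_comm hf).symm

theorem integral_trace {f : X → Matrix n n 𝕜} (hf : Integrable f μ) :
    (∫ x, f x ∂μ).trace = ∫ x, (f x).trace ∂μ :=
  ((traceLinearMap n 𝕜 𝕜).toContinuousLinearMap.integral_comp_comm hf).symm

theorem integral_mul_mul (A B : Matrix n n 𝕜) {f : X → Matrix n n 𝕜} (hf : Integrable f μ) :
    ∫ x, A * f x * B ∂μ = A * (∫ x, f x ∂μ) * B := by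
  simp only [mul_assoc]
  exact
    (LinearMap.mulLeft 𝕜 A ∘ₗ LinearMap.mulRight 𝕜 B).toContinuousLinearMap.integral_comp_comm hf

end Integral

section Twirl

variable {n 𝕜 : Type*} [Fintype n] [DecidableEq n] [RCLike 𝕜]
  [MeasurableSpace (unitaryGroup n 𝕜)] [BorelSpace (unitaryGroup n 𝕜)]

theorem integrable_unitary_mul_mul_conjTranspose (μ : Measure (unitaryGroup n 𝕜))
    [IsFiniteMeasure μ] (B : Matrix n n 𝕜) :
    Integrable (fun U : unitaryGroup n 𝕜 ↦ (U : Matrix n n 𝕜) * B * (U : Matrix n n 𝕜)ᴴ) μ :=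
  (by fun_prop : Continuous _).integrable_of_hasCompactSupport (.of_compactSpace _)

theorem integral_unitary_mul_mul_conjTranspose (μ : Measure (unitaryGroup n 𝕜))
    [μ.IsMulLeftInvariant] [IsProbabilityMeasure μ] (B : Matrix n n 𝕜) :
    ∫ U : unitaryGroup n 𝕜, (U : Matrix n n 𝕜) * B * (U : Matrix n n 𝕜)ᴴ ∂μ
      = (B.trace / Fintype.card n) • 1 := by
  set f := fun U : unitaryGroup n 𝕜 ↦ (U : Matrix n n 𝕜) * B * (U : Matrix n n 𝕜)ᴴ
  have hf : Integrable f μ := integrable_unitary_mul_mul_conjTranspose μ B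
  set F := ∫ U, f U ∂μ with hF
  have hinv (V : unitaryGroup n 𝕜) : (V : Matrix n n 𝕜) * F * (V : Matrix n n 𝕜)ᴴ = F := by
    rw [hF, ← integral_mul_mul _ _ hf]
    conv_rhs => rw [← integral_mul_left_eq_self f V]
    simp [f, mul_assoc, conjTranspose_mul]
  have htrace : F.trace = B.trace := by
    rw [integral_trace hf]
    simp only [f, trace_mul_cycle _ B, ← star_eq_conjTranspose, Unitary.coe_star_mul_self, one_mul]
    simp
  rw [← htrace]
  refine eq_trace_div_card_smul_one_of_forall_commute fun V hV ↦ ?_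
  calc V * F = V * F * Vᴴ * V := by
        rw [mul_assoc _ Vᴴ, ← star_eq_conjTranspose, Unitary.star_mul_self_of_mem hV, mul_one]
    _ = F * V := by rw [hinv ⟨V, hV⟩]

end Twirl

theorem one_kronecker_mul_mul_conjTranspose_apply {R n α : Type*} [Fintype R] [DecidableEq R]
    [Fintype n] [CommSemiring α] [StarRing α] (U : Matrix n n α) (ρ : Matrix (R × n) (R × n) α)
    (r r' : R) (i j : n) :
    ((1 ⊗ₖ U * ρ * (1 ⊗ₖ U)ᴴ : Matrix (R × n) (R × n) α) (r, i) (r', j))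
      = (U * (comp R R n n α).symm ρ r r' * Uᴴ) i j := by
  simp [mul_apply, kroneckerMap_apply, one_apply, Fintype.sum_prod_type, apply_ite star]

end Matrix

theorem haar_scrambling_decouples_general
    (R : Type) [Fintype R] [DecidableEq R]
    (d : ℕ)
    (ρ : Matrix (R × Fin d) (R × Fin d) ℂ)
    (μ : Measure (Matrix.unitaryGroup (Fin d) ℂ))
    [μ.IsHaarMeasure] [IsProbabilityMeasure μ] :
    ∫ U : Matrix.unitaryGroup (Fin d) ℂ,
        ((1 : Matrix R R ℂ) ⊗ₖ (U : Matrix (Fin d) (Fin d) ℂ)) * ρ *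
          ((1 : Matrix R R ℂ) ⊗ₖ (U : Matrix (Fin d) (Fin d) ℂ))ᴴ ∂μ
      = ptraceA ρ ⊗ₖ ((1 / (d : ℂ)) • (1 : Matrix (Fin d) (Fin d) ℂ)) := by
  have : BorelSpace (unitaryGroup (Fin d) ℂ) := ⟨rfl⟩
  have hint : Integrable (fun U : unitaryGroup (Fin d) ℂ ↦
      ((1 : Matrix R R ℂ) ⊗ₖ (U : Matrix (Fin d) (Fin d) ℂ)) * ρ *
        ((1 : Matrix R R ℂ) ⊗ₖ (U : Matrix (Fin d) (Fin d) ℂ))ᴴ) μ :=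
    (by fun_prop : Continuous _).integrable_of_hasCompactSupport (.of_compactSpace _)
  ext ⟨r, i⟩ ⟨r', j⟩
  simp_rw [integral_apply_apply hint, one_kronecker_mul_mul_conjTranspose_apply]
  rw [← integral_apply_apply (integrable_unitary_mul_mul_conjTranspose μ _),
    integral_unitary_mul_mul_conjTranspose]
  simp [ptraceA, trace, kroneckerMap_apply, one_apply, div_eq_mul_inv]

/-- **Haar scrambling erases correlations with the reference**: averaging
`(1_R ⊗ U) ρ (1_R ⊗ U)ᴴ` over the Haar probability measure on the unitary group
leaves `ρ_R ⊗ (1/d) 1`, the reduced state on `R` tensored with the maximally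
mixed state. -/
theorem haar_scrambling_decouples
    (R : Type) [Fintype R] [DecidableEq R] [Nonempty R]
    (d : ℕ) (hd : 1 ≤ d)
    (ρ : Matrix (R × Fin d) (R × Fin d) ℂ)
    (μ : Measure (Matrix.unitaryGroup (Fin d) ℂ))
    [μ.IsHaarMeasure] [IsProbabilityMeasure μ] :
    ∫ U : Matrix.unitaryGroup (Fin d) ℂ,
        ((1 : Matrix R R ℂ) ⊗ₖ (U : Matrix (Fin d) (Fin d) ℂ)) * ρ *
          ((1 : Matrix R R ℂ) ⊗ₖ (U : Matrix (Fin d) (Fin d) ℂ))ᴴ ∂μ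
      = ptraceA ρ ⊗ₖ ((1 / (d : ℂ)) • (1 : Matrix (Fin d) (Fin d) ℂ)) :=
  haar_scrambling_decouples_general R d ρ μ
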